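/- Let a ≥ 2 be an integer, let λ_1,…,λ_a ∈ ℂ, set μ = (1/a)∑_{j=1}^a λ_j, and for t > 0 define E_λ(t) = ∫_{(0,∞)^{a−1}} (∏_{j=1}^{a−1} u_j^{λ_{j+1}−λ_j}) · exp(−t^{1/a}(1/u_1 + u_1/u_2 + ⋯ + u_{a−2}/u_{a−1} + u_{a−1})) du_1/u_1 ⋯ du_{a−1}/u_{a−1}. Then for every z ∈ ℂ with Re(z − μ + λ_j) > 0 for all j = 1,…,a, ∫_0^∞ E_λ(t) t^{z−1} dt = ∏_{j=1}^{a} Γ(z − μ + λ_j). -/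

import Mathlib

open MeasureTheory Set Finset

noncomputable section
namespace MellinElambda

variable (m : ℕ)

/-- exponent matrix over a general field -/
def Bf (K : Type*) [Field K] : Fin (m+2) → Fin (m+2) → K := fun j k =>
  if (k : ℕ) = 0 then ((m:K)+2)⁻¹
  else (if (k:ℕ) = (j:ℕ) then 1 else 0) - (if (k:ℕ) = (j:ℕ)+1 then 1 else 0)

variable {K : Type*} [Field K]

lemma Bf_cast (j k : Fin (m+2)) : ((Bf m ℝ j k : ℝ) : ℂ) = Bf m ℂ j k := by
  simp only [Bf]
  split_ifs <;> push_cast <;> ring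

lemma sum_mul_Bf_zero (c : Fin (m+2) → K) :
    ∑ j, c j * Bf m K j 0 = (∑ j, c j) * ((m:K)+2)⁻¹ := by
  simp only [Bf, Fin.val_zero, if_true, ← Finset.sum_mul]

lemma sum_mul_Bf_succ (c : Fin (m+2) → K) (i : Fin (m+1)) :
    ∑ j, c j * Bf m K j i.succ = c i.succ - c i.castSucc := by
  have h0 : ((i.succ : Fin (m+2)) : ℕ) ≠ 0 := by simp [Fin.val_succ]
  simp only [Bf, if_neg h0, mul_sub]
  rw [Finset.sum_sub_distrib]
  congr 1
  · rw [Finset.sum_congr rfl (fun j _ => ?_), Finset.sum_ite_eq Finset.univ i.succ c]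
    · simp
    · have : ((i.succ : Fin (m+2)) : ℕ) = (j:ℕ) ↔ i.succ = j := by
        rw [Fin.val_eq_val]
      simp only [mul_ite, mul_one, mul_zero, this]
  · rw [Finset.sum_congr rfl (fun j _ => ?_), Finset.sum_ite_eq Finset.univ i.castSucc c]
    · simp
    · have : ((i.succ : Fin (m+2)) : ℕ) = (j:ℕ) + 1 ↔ i.castSucc = j := by
        rw [Fin.val_succ, ← Fin.val_eq_val, Fin.coe_castSucc]
        omega
      simp only [mul_ite, mul_one, mul_zero, this]

lemma sum_Bf_zero [CharZero K] : ∑ j, Bf m K j 0 = 1 := by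
  have := sum_mul_Bf_zero m (fun _ => (1:K))
  simp only [one_mul] at this
  rw [this, Finset.sum_const, Finset.card_univ, Fintype.card_fin]
  have h2 : ((m:K)+2) ≠ 0 := by
    have h3 : ((m:K)+2) = ((m+2 : ℕ) : K) := by push_cast; ring
    rw [h3]
    exact Nat.cast_ne_zero.mpr (by omega)
  rw [nsmul_eq_mul]
  push_cast
  field_simp

lemma sum_Bf_succ (i : Fin (m+1)) : ∑ j, Bf m K j i.succ = 0 := by
  have := sum_mul_Bf_succ m (fun _ => (1:K)) i
  simpa using this


/-! ### matrices -/

def Bmat : Matrix (Fin (m+2)) (Fin (m+2)) ℝ := Matrix.of (Bf m ℝ)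

def Cmat : Matrix (Fin (m+2)) (Fin (m+2)) ℝ := Matrix.of fun j k =>
  if (j:ℕ) = 0 then 1 else ((j:ℕ):ℝ) * ((m:ℝ)+2)⁻¹ - (if (k:ℕ) < (j:ℕ) then 1 else 0)

def Wmat : Matrix (Fin (m+2)) (Fin (m+2)) ℝ := Matrix.of fun j k =>
  if (k:ℕ) = 0 then (if (j:ℕ) = 0 then 1 else 0)
  else (if (k:ℕ) = (j:ℕ) then 1 else 0) - (if (k:ℕ) = (j:ℕ)+1 then 1 else 0)

lemma sum_mul_Wf_zero (c : Fin (m+2) → ℝ) :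
    ∑ j, c j * Wmat m j 0 = c 0 := by
  simp only [Wmat, Matrix.of_apply, Fin.val_zero, if_true, mul_ite, mul_one, mul_zero]
  rw [Finset.sum_congr rfl (fun j _ => ?_), Finset.sum_ite_eq' Finset.univ 0 c]
  · simp
  · have : ((j : Fin (m+2)) : ℕ) = 0 ↔ j = (0 : Fin (m+2)) := by
      rw [← Fin.val_eq_val]; simp
    simp only [this]

lemma sum_mul_Wf_succ (c : Fin (m+2) → ℝ) (i : Fin (m+1)) :
    ∑ j, c j * Wmat m j i.succ = c i.succ - c i.castSucc := by
  have h0 : ((i.succ : Fin (m+2)) : ℕ) ≠ 0 := by simp [Fin.val_succ]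
  have h := sum_mul_Bf_succ m c i
  simp only [Bf, if_neg h0] at h
  simp only [Wmat, Matrix.of_apply, if_neg h0]
  exact h

lemma hmK : ((m:ℝ)+2) ≠ 0 := by positivity

/-- number of k with val < v -/
lemma sum_indicator_lt (v : ℕ) (hv : v ≤ m + 2) :
    ∑ k : Fin (m+2), (if (k:ℕ) < v then (1:ℝ) else 0) = v := by
  rw [Fin.sum_univ_eq_sum_range (fun i => if i < v then (1:ℝ) else 0) (m+2)]
  rw [Finset.sum_boole]
  have : (Finset.range (m+2)).filter (fun i => i < v) = Finset.range v := by
    ext i; simp; omega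
  simp [this]

lemma CB_eq_one : Cmat m * Bmat m = 1 := by
  ext j l
  rw [Matrix.mul_apply]
  simp only [Bmat, Cmat, Matrix.of_apply]
  rcases Nat.eq_zero_or_pos (j:ℕ) with hj | hj
  · simp only [hj, if_true]
    have hj0 : j = 0 := Fin.ext hj
    subst hj0
    induction l using Fin.cases with
    | zero =>
        simp only [one_mul]
        rw [sum_Bf_zero]
        simp
    | succ i =>
        simp only [one_mul]
        rw [sum_Bf_succ]
        have : (0 : Fin (m+2)) ≠ i.succ := Fin.ne_of_val_ne (by simp [Fin.val_succ])
        simp [Matrix.one_apply, this]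
  · have hj0 : (j:ℕ) ≠ 0 := by omega
    simp only [if_neg hj0]
    induction l using Fin.cases with
    | zero =>
        rw [sum_mul_Bf_zero m (fun k => ((j:ℕ):ℝ) * ((m:ℝ)+2)⁻¹ - (if (k:ℕ) < (j:ℕ) then 1 else 0))]
        rw [Finset.sum_sub_distrib, Finset.sum_const, sum_indicator_lt m (j:ℕ) (by omega)]
        have h1 : (1 : Matrix (Fin (m+2)) (Fin (m+2)) ℝ) j 0 = 0 := by
          rw [Matrix.one_apply_ne (Fin.ne_of_val_ne (by simpa using hj0))]
        rw [h1, Finset.card_univ, Fintype.card_fin, nsmul_eq_mul]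
        have h2 := hmK m
        field_simp
        push_cast
        ring
    | succ i =>
        rw [sum_mul_Bf_succ m (fun k => ((j:ℕ):ℝ) * ((m:ℝ)+2)⁻¹ - (if (k:ℕ) < (j:ℕ) then 1 else 0)) i]
        have hval : ((1 : Matrix (Fin (m+2)) (Fin (m+2)) ℝ) j i.succ)
            = if (j:ℕ) = (i:ℕ)+1 then 1 else 0 := by
          rw [Matrix.one_apply]
          congr 1
          rw [← Fin.val_eq_val]
          simp [Fin.val_succ]
        rw [hval]
        have h1 : ((i.succ : Fin (m+2)) : ℕ) = (i:ℕ)+1 := by simp [Fin.val_succ]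
        have h2 : ((i.castSucc : Fin (m+2)) : ℕ) = (i:ℕ) := by simp
        simp only [h1, h2]
        split_ifs <;> first | (exfalso; omega) | ring

lemma BC_eq_one : Bmat m * Cmat m = 1 := (mul_eq_one_comm).mpr (CB_eq_one m)

lemma CW_entries (j l : Fin (m+2)) :
    (Cmat m * Wmat m) j l =
      if (l:ℕ) = 0 then Cmat m j 0
      else if j = l then 1 else 0 := by
  rw [Matrix.mul_apply]
  induction l using Fin.cases with
  | zero =>
      rw [sum_mul_Wf_zero m (fun k => Cmat m j k)]
      simp
  | succ i =>
      rw [sum_mul_Wf_succ m (fun k => Cmat m j k) i]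
      have h0 : ((i.succ : Fin (m+2)) : ℕ) ≠ 0 := by simp [Fin.val_succ]
      rw [if_neg h0]
      simp only [Cmat, Matrix.of_apply]
      rcases Nat.eq_zero_or_pos (j:ℕ) with hj | hj
      · have : j ≠ i.succ := Fin.ne_of_val_ne (by simp [Fin.val_succ]; omega)
        simp [hj, this]
      · have hj0 : (j:ℕ) ≠ 0 := by omega
        have hjeq : (j = i.succ) ↔ ((j:ℕ) = (i:ℕ)+1) := by
          rw [← Fin.val_eq_val]; simp [Fin.val_succ]
        simp only [if_neg hj0, Fin.coe_castSucc, Fin.val_succ, hjeq]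
        split_ifs <;> first | (exfalso; omega) | ring

lemma detW : (Wmat m).det = 1 := by
  have h : (Wmat m).BlockTriangular (id : Fin (m+2) → Fin (m+2)) := by
    intro i j hij
    simp only [id] at hij
    have h1 : (j:ℕ) < (i:ℕ) := hij
    simp only [Wmat, Matrix.of_apply]
    split_ifs <;> first | (exfalso; omega) | norm_num
  rw [Matrix.det_of_upperTriangular h]
  rw [Finset.prod_congr rfl (fun i _ => ?_), Finset.prod_const_one]
  simp only [Wmat, Matrix.of_apply]
  rcases Nat.eq_zero_or_pos (i:ℕ) with hi | hi
  · simp [hi]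
  · rw [if_neg (by omega)]
    simp

lemma detC : (Cmat m).det = 1 := by
  have hCW : (Cmat m * Wmat m).BlockTriangular (OrderDual.toDual ∘ (id : Fin (m+2) → Fin (m+2))) := by
    intro i j hij
    have h1 : (i:ℕ) < (j:ℕ) := hij
    rw [CW_entries]
    have hne : (j:ℕ) ≠ 0 := by omega
    have hij' : i ≠ j := Fin.ne_of_val_ne (by omega)
    simp [hne, hij']
  have hdiag : ∀ i, (Cmat m * Wmat m) i i = 1 := by
    intro i
    rw [CW_entries]
    rcases Nat.eq_zero_or_pos (i:ℕ) with hi | hi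
    · have h0 : i = 0 := Fin.ext hi
      subst h0
      simp [Cmat]
    · rw [if_neg (by omega), if_pos rfl]
  have := Matrix.det_of_lowerTriangular (Cmat m * Wmat m) hCW
  rw [Matrix.det_mul, detW, mul_one] at this
  rw [this, Finset.prod_congr rfl (fun i _ => hdiag i), Finset.prod_const_one]

lemma detB : (Bmat m).det = 1 := by
  have := congrArg Matrix.det (BC_eq_one m)
  rw [Matrix.det_mul, detC, mul_one, Matrix.det_one] at this
  exact this


/-! ### the monomial map -/

def P : Set (Fin (m+2) → ℝ) := {w | ∀ k, 0 < w k}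

lemma P_meas : MeasurableSet (P m) := by
  have : P m = Set.pi Set.univ (fun _ => Set.Ioi (0:ℝ)) := by
    ext w; simp [P, Set.mem_pi]
  rw [this]
  exact MeasurableSet.univ_pi (fun _ => measurableSet_Ioi)

lemma P_open : IsOpen (P m) := by
  have : P m = Set.pi Set.univ (fun _ => Set.Ioi (0:ℝ)) := by
    ext w; simp [P, Set.mem_pi]
  rw [this]
  exact isOpen_set_pi Set.finite_univ (fun _ _ => isOpen_Ioi)

def T (w : Fin (m+2) → ℝ) : Fin (m+2) → ℝ :=
  fun j => Real.exp (∑ k, Bf m ℝ j k * Real.log (w k))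

def Tinv (x : Fin (m+2) → ℝ) : Fin (m+2) → ℝ :=
  fun j => Real.exp (∑ k, Cmat m j k * Real.log (x k))

lemma T_pos (w : Fin (m+2) → ℝ) (j : Fin (m+2)) : 0 < T m w j := Real.exp_pos _

lemma Tinv_pos (x : Fin (m+2) → ℝ) (j : Fin (m+2)) : 0 < Tinv m x j := Real.exp_pos _

lemma log_T (w : Fin (m+2) → ℝ) (j : Fin (m+2)) :
    Real.log (T m w j) = ∑ k, Bf m ℝ j k * Real.log (w k) := Real.log_exp _

lemma log_Tinv (x : Fin (m+2) → ℝ) (j : Fin (m+2)) :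
    Real.log (Tinv m x j) = ∑ k, Cmat m j k * Real.log (x k) := Real.log_exp _

lemma comp_aux (M N : Matrix (Fin (m+2)) (Fin (m+2)) ℝ) (hMN : M * N = 1)
    (L : Fin (m+2) → ℝ) (j : Fin (m+2)) :
    ∑ k, M j k * ∑ l, N k l * L l = L j := by
  have : ∀ k, M j k * ∑ l, N k l * L l = ∑ l, M j k * N k l * L l := by
    intro k
    rw [Finset.mul_sum]
    exact Finset.sum_congr rfl (fun l _ => by ring)
  rw [Finset.sum_congr rfl (fun k _ => this k), Finset.sum_comm]
  have h1 : ∀ l, ∑ k, M j k * N k l * L l = (if j = l then 1 else 0) * L l := by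
    intro l
    rw [← Finset.sum_mul]
    congr 1
    have := congrFun (congrFun hMN j) l
    rw [Matrix.mul_apply] at this
    rw [this, Matrix.one_apply]
  rw [Finset.sum_congr rfl (fun l _ => h1 l)]
  simp [Finset.sum_ite_eq]

lemma Tinv_T {w : Fin (m+2) → ℝ} (hw : w ∈ P m) : Tinv m (T m w) = w := by
  funext j
  rw [Tinv]
  simp only [log_T]
  have h' : (∑ k, Cmat m j k * ∑ l, Bf m ℝ k l * Real.log (w l)) = Real.log (w j) :=
    comp_aux m (Cmat m) (Matrix.of (Bf m ℝ)) (CB_eq_one m) (fun k => Real.log (w k)) j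
  rw [h']
  exact Real.exp_log (hw j)

lemma T_Tinv {x : Fin (m+2) → ℝ} (hx : x ∈ P m) : T m (Tinv m x) = x := by
  funext j
  rw [T]
  simp only [log_Tinv]
  have h' : (∑ k, Bf m ℝ j k * ∑ l, Cmat m k l * Real.log (x l)) = Real.log (x j) :=
    comp_aux m (Matrix.of (Bf m ℝ)) (Cmat m) (BC_eq_one m) (fun k => Real.log (x k)) j
  rw [h']
  exact Real.exp_log (hx j)

lemma T_mem_P (w : Fin (m+2) → ℝ) : T m w ∈ P m := fun j => T_pos m w j

lemma image_T : T m '' P m = P m := by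
  apply Set.Subset.antisymm
  · rintro x ⟨w, _, rfl⟩
    exact T_mem_P m w
  · intro x hx
    exact ⟨Tinv m x, fun j => Tinv_pos m x j, T_Tinv m hx⟩

lemma injOn_T : Set.InjOn (T m) (P m) := by
  intro w hw w' hw' h
  rw [← Tinv_T m hw, ← Tinv_T m hw', h]

/-! ### derivative -/

def Amat (w : Fin (m+2) → ℝ) : Matrix (Fin (m+2)) (Fin (m+2)) ℝ :=
  Matrix.of fun j k => T m w j * Bf m ℝ j k / w k

def Tlin (w : Fin (m+2) → ℝ) : (Fin (m+2) → ℝ) →L[ℝ] (Fin (m+2) → ℝ) :=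
  LinearMap.toContinuousLinearMap (Matrix.toLin' (Amat m w))

lemma Tlin_apply (w v : Fin (m+2) → ℝ) (j : Fin (m+2)) :
    Tlin m w v j = ∑ k, (T m w j * Bf m ℝ j k / w k) * v k := by
  simp only [Tlin, LinearMap.coe_toContinuousLinearMap', Matrix.toLin'_apply,
    Matrix.mulVec, Amat, Matrix.of_apply]
  rfl

lemma hasFDerivAt_T {w : Fin (m+2) → ℝ} (hw : w ∈ P m) :
    HasFDerivAt (T m) (Tlin m w) w := by
  apply hasFDerivAt_pi''
  intro j
  have hg : HasFDerivAt (fun w : Fin (m+2) → ℝ => ∑ k, Bf m ℝ j k * Real.log (w k))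
      (∑ k : Fin (m+2), (Bf m ℝ j k * (w k)⁻¹) •
        (ContinuousLinearMap.proj k : (Fin (m+2) → ℝ) →L[ℝ] ℝ)) w := by
    apply HasFDerivAt.fun_sum
    intro k _
    have hlog : HasFDerivAt (fun w : Fin (m+2) → ℝ => Real.log (w k))
        ((w k)⁻¹ • (ContinuousLinearMap.proj k : (Fin (m+2) → ℝ) →L[ℝ] ℝ)) w := by
      have h1 : HasFDerivAt (fun w : Fin (m+2) → ℝ => w k)
          (ContinuousLinearMap.proj k : (Fin (m+2) → ℝ) →L[ℝ] ℝ) w :=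
        hasFDerivAt_apply k w
      exact (Real.hasDerivAt_log (ne_of_gt (hw k))).comp_hasFDerivAt w h1
    have := hlog.const_mul (Bf m ℝ j k)
    rwa [smul_smul] at this
  have hexp := (Real.hasDerivAt_exp (∑ k, Bf m ℝ j k * Real.log (w k))).comp_hasFDerivAt w hg
  convert hexp using 1
  · rfl
  · rfl
  ext v
  simp only [ContinuousLinearMap.coe_comp', Function.comp_apply, ContinuousLinearMap.proj_apply,
    ContinuousLinearMap.smul_apply, ContinuousLinearMap.coe_sum', Finset.sum_apply,
    smul_eq_mul]
  rw [Tlin_apply, Finset.mul_sum]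
  apply Finset.sum_congr rfl
  intro k _
  rw [show T m w j = Real.exp (∑ k, Bf m ℝ j k * Real.log (w k)) from rfl]
  field_simp

lemma sum_Bf_col (k : Fin (m+2)) : ∑ j, Bf m ℝ j k = if k = 0 then 1 else 0 := by
  induction k using Fin.cases with
  | zero => rw [sum_Bf_zero, if_pos rfl]
  | succ i =>
      rw [sum_Bf_succ, if_neg]
      exact (Fin.ne_of_val_ne (by simp [Fin.val_succ])).symm

lemma prod_T (w : Fin (m+2) → ℝ) (hw : w ∈ P m) : ∏ j, T m w j = w 0 := by
  simp only [T]
  rw [← Real.exp_sum, Finset.sum_comm]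
  have : ∀ k, ∑ j, Bf m ℝ j k * Real.log (w k) = (if k = 0 then 1 else 0) * Real.log (w k) := by
    intro k
    rw [← Finset.sum_mul, sum_Bf_col]
  rw [Finset.sum_congr rfl (fun k _ => this k)]
  simp only [ite_mul, one_mul, zero_mul]
  rw [Finset.sum_ite_eq' Finset.univ (0 : Fin (m+2)) (fun k => Real.log (w k))]
  simp [Real.exp_log (hw 0)]

lemma det_Amat (w : Fin (m+2) → ℝ) (hw : w ∈ P m) :
    (Amat m w).det = w 0 * ∏ k, (w k)⁻¹ := by
  have hA : Amat m w = Matrix.diagonal (T m w) * (Matrix.of (Bf m ℝ) *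
      Matrix.diagonal (fun k => (w k)⁻¹)) := by
    ext j k
    rw [Matrix.diagonal_mul, Matrix.mul_diagonal]
    simp only [Amat, Matrix.of_apply]
    rw [div_eq_mul_inv]
    ring
  rw [hA, Matrix.det_mul, Matrix.det_mul, Matrix.det_diagonal, Matrix.det_diagonal]
  rw [prod_T m w hw, show (Matrix.of (Bf m ℝ)).det = 1 from detB m]
  ring

lemma det_Tlin (w : Fin (m+2) → ℝ) (hw : w ∈ P m) :
    (Tlin m w).det = w 0 * ∏ k, (w k)⁻¹ := by
  rw [Tlin, ContinuousLinearMap.det, LinearMap.coe_toContinuousLinearMap,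
    LinearMap.det_toLin', det_Amat m w hw]

lemma det_Tlin_pos (w : Fin (m+2) → ℝ) (hw : w ∈ P m) : 0 < (Tlin m w).det := by
  rw [det_Tlin m w hw]
  exact mul_pos (hw 0) (Finset.prod_pos (fun k _ => inv_pos.mpr (hw k)))


/-! ### pointwise identities -/

lemma cpow_pos_eq {x : ℝ} (hx : 0 < x) (c : ℂ) :
    (x:ℂ) ^ c = Complex.exp (c * (Real.log x : ℂ)) := by
  rw [Complex.cpow_def_of_ne_zero (by exact_mod_cast ne_of_gt hx),
    ← Complex.ofReal_log hx.le, mul_comm]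

lemma sum_aux1 (f : Fin (m+1) → ℝ) (c : ℕ) :
    ∑ i : Fin (m+1), (if (i:ℕ) = c then (1:ℝ) else 0) * f i
      = if h : c < m+1 then f ⟨c, h⟩ else 0 := by
  split_ifs with h
  · rw [Finset.sum_congr rfl (fun i _ => ?_), Finset.sum_ite_eq' Finset.univ (⟨c,h⟩ : Fin (m+1)) f]
    · simp
    · have : ((i:ℕ) = c) ↔ (i = ⟨c,h⟩) := by rw [Fin.ext_iff]
      rw [ite_mul, one_mul, zero_mul]
      simp only [this]
  · apply Finset.sum_eq_zero
    intro i _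
    rw [if_neg (by have := i.isLt; omega), zero_mul]

lemma T_decomp {w : Fin (m+2) → ℝ} (hw : w ∈ P m) (j : Fin (m+2)) :
    T m w j = w 0 ^ (((m:ℝ)+2)⁻¹) *
      Real.exp (∑ i : Fin (m+1), Bf m ℝ j i.succ * Real.log (w i.succ)) := by
  simp only [T]
  rw [Fin.sum_univ_succ, Real.exp_add]
  congr 1
  have hB0 : Bf m ℝ j 0 = ((m:ℝ)+2)⁻¹ := by simp [Bf]
  rw [hB0, Real.rpow_def_of_pos (hw 0), mul_comm]

lemma Bf_zero_succ (i : Fin (m+1)) :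
    Bf m ℝ 0 i.succ = -(if (i:ℕ) = 0 then (1:ℝ) else 0) := by
  have h1 : ((i.succ : Fin (m+2)) : ℕ) = (i:ℕ)+1 := by simp [Fin.val_succ]
  have h2 : (((0:Fin (m+2))) : ℕ) = 0 := rfl
  unfold Bf
  rw [h1, h2, if_neg (by omega)]
  by_cases hi : (i:ℕ) = 0
  · rw [if_neg (by omega), if_pos (by omega)]
    norm_num [hi]
  · rw [if_neg (by omega), if_neg (by omega)]
    norm_num [hi]

lemma Bf_succ_succ (p : Fin (m+1)) (i : Fin (m+1)) :
    Bf m ℝ p.succ i.succ = (if (i:ℕ) = (p:ℕ) then (1:ℝ) else 0)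
      - (if (i:ℕ) = (p:ℕ)+1 then (1:ℝ) else 0) := by
  have h1 : ((i.succ : Fin (m+2)) : ℕ) = (i:ℕ)+1 := by simp [Fin.val_succ]
  have h3 : ((p.succ : Fin (m+2)) : ℕ) = (p:ℕ)+1 := by simp [Fin.val_succ]
  unfold Bf
  rw [h1, h3, if_neg (by omega)]
  congr 1
  · by_cases hi : (i:ℕ) = (p:ℕ)
    · rw [if_pos (by omega), if_pos hi]
    · rw [if_neg (by omega), if_neg hi]
  · by_cases hi : (i:ℕ) = (p:ℕ)+1
    · rw [if_pos (by omega), if_pos hi]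
    · rw [if_neg (by omega), if_neg hi]

lemma exp_R_zero {w : Fin (m+2) → ℝ} (hw : w ∈ P m) :
    Real.exp (∑ i : Fin (m+1), Bf m ℝ 0 i.succ * Real.log (w i.succ)) = (w 1)⁻¹ := by
  have : ∀ i : Fin (m+1), Bf m ℝ 0 i.succ * Real.log (w i.succ)
      = -((if (i:ℕ) = 0 then (1:ℝ) else 0) * Real.log (w i.succ)) := by
    intro i; rw [Bf_zero_succ]; ring
  rw [Finset.sum_congr rfl (fun i _ => this i), Finset.sum_neg_distrib]
  rw [sum_aux1 m (fun i => Real.log (w i.succ)) 0]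
  rw [dif_pos (by omega : 0 < m+1)]
  rw [Real.exp_neg]
  congr 1
  rw [show ((⟨0, by omega⟩ : Fin (m+1)).succ : Fin (m+2)) = 1 from rfl]
  exact Real.exp_log (hw 1)

lemma exp_R_succ {w : Fin (m+2) → ℝ} (hw : w ∈ P m) (p : Fin (m+1)) :
    Real.exp (∑ i : Fin (m+1), Bf m ℝ p.succ i.succ * Real.log (w i.succ))
      = (if h : (p:ℕ)+1 < m+1 then w p.succ / w (Fin.succ ⟨(p:ℕ)+1, h⟩) else w p.succ) := by
  have : ∀ i : Fin (m+1), Bf m ℝ p.succ i.succ * Real.log (w i.succ)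
      = (if (i:ℕ) = (p:ℕ) then (1:ℝ) else 0) * Real.log (w i.succ)
        - (if (i:ℕ) = (p:ℕ)+1 then (1:ℝ) else 0) * Real.log (w i.succ) := by
    intro i; rw [Bf_succ_succ]; ring
  rw [Finset.sum_congr rfl (fun i _ => this i), Finset.sum_sub_distrib]
  rw [sum_aux1 m (fun i => Real.log (w i.succ)) (p:ℕ),
    sum_aux1 m (fun i => Real.log (w i.succ)) ((p:ℕ)+1)]
  rw [dif_pos p.isLt]
  have hp : (⟨(p:ℕ), p.isLt⟩ : Fin (m+1)) = p := rfl
  rw [hp]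
  split_ifs with h
  · rw [Real.exp_sub, Real.exp_log (hw p.succ), Real.exp_log (hw _)]
  · rw [sub_zero, Real.exp_log (hw p.succ)]

def Sval (w : Fin (m+2) → ℝ) : ℝ :=
  (w 1)⁻¹ + ∑ i : Fin (m+1),
    (if h : (i:ℕ)+1 < m+1 then w i.succ / w (Fin.succ ⟨(i:ℕ)+1, h⟩) else w i.succ)

lemma sum_T {w : Fin (m+2) → ℝ} (hw : w ∈ P m) :
    ∑ j, T m w j = w 0 ^ (((m:ℝ)+2)⁻¹) * Sval m w := by
  rw [Finset.sum_congr rfl (fun j _ => T_decomp m hw j), ← Finset.mul_sum]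
  congr 1
  rw [Fin.sum_univ_succ, exp_R_zero m hw,
    Finset.sum_congr rfl (fun p _ => exp_R_succ m hw p)]
  rfl


/-! ### complex exponent identities -/

section WithLam

variable (lam : Fin (m+2) → ℂ) (z : ℂ)

def sf : Fin (m+2) → ℂ := fun j => z - (∑ j, lam j) / ((m:ℂ)+2) + lam j

lemma hmC : ((m:ℂ)+2) ≠ 0 := by
  have h3 : ((m:ℂ)+2) = ((m+2 : ℕ) : ℂ) := by push_cast; ring
  rw [h3]
  exact Nat.cast_ne_zero.mpr (by omega)

lemma sum_sf : ∑ j, sf m lam z j = ((m:ℂ)+2) * z := by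
  simp only [sf]
  rw [Finset.sum_add_distrib, Finset.sum_sub_distrib, Finset.sum_const, Finset.card_univ,
    Fintype.card_fin, nsmul_eq_mul]
  have := hmC m
  push_cast
  field_simp
  rw [Finset.sum_const, Finset.card_univ, Fintype.card_fin, nsmul_eq_mul]
  push_cast
  field_simp
  ring

lemma coeff_zero : ∑ j, (sf m lam z j - 1) * Bf m ℂ j 0 = z - 1 := by
  rw [sum_mul_Bf_zero]
  rw [Finset.sum_sub_distrib, Finset.sum_const, Finset.card_univ, Fintype.card_fin,
    nsmul_eq_mul, sum_sf]
  have := hmC m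
  push_cast
  field_simp

lemma coeff_succ (i : Fin (m+1)) :
    ∑ j, (sf m lam z j - 1) * Bf m ℂ j i.succ = lam i.succ - lam i.castSucc := by
  rw [sum_mul_Bf_succ]
  simp only [sf]
  ring

lemma log_T_complex {w : Fin (m+2) → ℝ} (j : Fin (m+2)) :
    ((Real.log (T m w j) : ℝ) : ℂ) = ∑ k, Bf m ℂ j k * ((Real.log (w k) : ℝ) : ℂ) := by
  rw [log_T]
  push_cast
  exact Finset.sum_congr rfl (fun k _ => by rw [Bf_cast])

lemma prod_cpow {w : Fin (m+2) → ℝ} (hw : w ∈ P m) :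
    ∏ j, ((T m w j : ℝ) : ℂ) ^ (sf m lam z j - 1)
      = ((w 0 : ℝ) : ℂ) ^ (z - 1) *
          ∏ i : Fin (m+1), ((w i.succ : ℝ) : ℂ) ^ (lam i.succ - lam i.castSucc) := by
  rw [Finset.prod_congr rfl (fun j _ => cpow_pos_eq (T_pos m w j) (sf m lam z j - 1)),
    ← Complex.exp_sum]
  have hexp : ∑ j, (sf m lam z j - 1) * ((Real.log (T m w j) : ℝ) : ℂ)
      = (z-1) * ((Real.log (w 0) : ℝ) : ℂ)
        + ∑ i : Fin (m+1), (lam i.succ - lam i.castSucc) * ((Real.log (w i.succ) : ℝ) : ℂ) := by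
    have h1 : ∀ j : Fin (m+2), (sf m lam z j - 1) * ((Real.log (T m w j) : ℝ) : ℂ)
        = ∑ k, (sf m lam z j - 1) * (Bf m ℂ j k * ((Real.log (w k) : ℝ) : ℂ)) := by
      intro j; rw [log_T_complex, Finset.mul_sum]
    rw [Finset.sum_congr rfl (fun j _ => h1 j), Finset.sum_comm]
    have h2 : ∀ k, ∑ j, (sf m lam z j - 1) * (Bf m ℂ j k * ((Real.log (w k) : ℝ) : ℂ))
        = (∑ j, (sf m lam z j - 1) * Bf m ℂ j k) * ((Real.log (w k) : ℝ) : ℂ) := by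
      intro k; rw [Finset.sum_mul]; exact Finset.sum_congr rfl (fun j _ => by ring)
    rw [Finset.sum_congr rfl (fun k _ => h2 k), Fin.sum_univ_succ, coeff_zero]
    congr 1
    exact Finset.sum_congr rfl (fun i _ => by rw [coeff_succ])
  rw [hexp, Complex.exp_add]
  congr 1
  · exact (cpow_pos_eq (hw 0) (z-1)).symm
  · rw [Finset.prod_congr rfl (fun i _ => cpow_pos_eq (hw i.succ) (lam i.succ - lam i.castSucc)),
      ← Complex.exp_sum]


/-! ### the integrands -/

def gfun : Fin (m+2) → ℝ → ℂ := fun j x => ↑(Real.exp (-x)) * (x:ℂ) ^ (sf m lam z j - 1)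

def Hfun : (Fin (m+2) → ℝ) → ℂ := fun x => ∏ j, gfun m lam z j (x j)

def Kp (q : ℝ × (Fin (m+1) → ℝ)) : ℂ :=
  ((∏ i : Fin (m+1), ((q.2 i : ℂ)) ^ (lam i.succ - lam i.castSucc))
    * Complex.exp (-(((q.1 ^ (((m:ℝ)+2)⁻¹)) : ℝ) : ℂ)
        * ((((q.2 0)⁻¹ + ∑ i : Fin (m+1),
              (if h : (i : ℕ) + 1 < m + 1 then q.2 i / q.2 ⟨(i : ℕ) + 1, h⟩
               else q.2 i) : ℝ)) : ℂ))
    * (((∏ i : Fin (m+1), (q.2 i)⁻¹ : ℝ)) : ℂ))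
  * (q.1:ℂ) ^ (z - 1)

lemma prod_exp_T {w : Fin (m+2) → ℝ} (hw : w ∈ P m) :
    (∏ j, (↑(Real.exp (-(T m w j))) : ℂ))
      = Complex.exp (-(((w 0 ^ (((m:ℝ)+2)⁻¹) : ℝ)) : ℂ) * ((Sval m w : ℝ) : ℂ)) := by
  rw [← Complex.ofReal_prod, ← Real.exp_sum]
  rw [Finset.sum_neg_distrib, sum_T m hw]
  rw [Complex.ofReal_exp]
  push_cast
  ring_nf

lemma key_pointwise {w : Fin (m+2) → ℝ} (hw : w ∈ P m) :
    |(Tlin m w).det| • Hfun m lam z (T m w) = Kp m lam z (w 0, fun i => w i.succ) := by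
  rw [abs_of_pos (det_Tlin_pos m w hw), det_Tlin m w hw]
  have hH : Hfun m lam z (T m w)
      = (∏ j, (↑(Real.exp (-(T m w j))) : ℂ)) * ∏ j, ((T m w j : ℝ) : ℂ) ^ (sf m lam z j - 1) := by
    simp only [Hfun, gfun]
    rw [← Finset.prod_mul_distrib]
  rw [hH, prod_exp_T m hw, prod_cpow m lam z hw, Kp]
  simp only [Fin.succ_zero_eq_one, Sval]
  rw [Complex.real_smul]
  have hprodinv : (∏ k, (w k)⁻¹) = (w 0)⁻¹ * ∏ i : Fin (m+1), (w i.succ)⁻¹ := by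
    rw [Fin.prod_univ_succ]
  rw [hprodinv, Complex.ofReal_mul, Complex.ofReal_mul, Complex.ofReal_inv, Complex.ofReal_prod]
  have hw0 : ((w 0 : ℝ) : ℂ) ≠ 0 := by
    exact_mod_cast ne_of_gt (hw 0)
  simp only [Complex.ofReal_inv]
  have hQ : (∏ i : Fin (m+1), ((w i.succ : ℝ) : ℂ)) ≠ 0 :=
    Finset.prod_ne_zero_iff.mpr (fun i _ => by exact_mod_cast ne_of_gt (hw i.succ))
  field_simp


/-! ### assembly -/

variable {m} in
lemma indicator_prod (x : Fin (m+2) → ℝ) :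
    Set.indicator (P m) (Hfun m lam z) x
      = ∏ j, Set.indicator (Set.Ioi (0:ℝ)) (gfun m lam z j) (x j) := by
  by_cases hx : x ∈ P m
  · rw [Set.indicator_of_mem hx]
    rw [Hfun]
    exact Finset.prod_congr rfl (fun j _ => (Set.indicator_of_mem (hx j) _).symm)
  · rw [Set.indicator_of_notMem hx]
    simp only [P, Set.mem_setOf_eq, not_forall] at hx
    obtain ⟨k, hk⟩ := hx
    refine (Finset.prod_eq_zero (Finset.mem_univ k) ?_).symm
    rw [Set.indicator_of_notMem (by simpa using hk)]

lemma integrable_ind (hz : ∀ j, 0 < (sf m lam z j).re) (j : Fin (m+2)) :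
    Integrable (Set.indicator (Set.Ioi (0:ℝ)) (gfun m lam z j)) :=
  (integrable_indicator_iff measurableSet_Ioi).mpr (Complex.GammaIntegral_convergent (hz j))

lemma integrableOn_H (hz : ∀ j, 0 < (sf m lam z j).re) :
    IntegrableOn (Hfun m lam z) (P m) := by
  have h := Integrable.fintype_prod (f := fun j => Set.indicator (Set.Ioi (0:ℝ)) (gfun m lam z j))
    (fun j => integrable_ind m lam z hz j)
  rw [show (fun x => ∏ j, Set.indicator (Set.Ioi (0:ℝ)) (gfun m lam z j) (x j))
      = Set.indicator (P m) (Hfun m lam z) from (funext (indicator_prod lam z)).symm] at h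
  exact (integrable_indicator_iff (P_meas m)).mp h

lemma integral_H (hz : ∀ j, 0 < (sf m lam z j).re) :
    ∫ x in P m, Hfun m lam z x = ∏ j, Complex.Gamma (sf m lam z j) := by
  rw [← integral_indicator (P_meas m)]
  rw [show Set.indicator (P m) (Hfun m lam z)
      = fun x => ∏ j, Set.indicator (Set.Ioi (0:ℝ)) (gfun m lam z j) (x j) from
    funext (indicator_prod lam z)]
  simp only [MeasureTheory.volume_pi]
  rw [MeasureTheory.integral_fintype_prod_eq_prod
    (fun j => Set.indicator (Set.Ioi (0:ℝ)) (gfun m lam z j))]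
  refine Finset.prod_congr rfl (fun j _ => ?_)
  rw [integral_indicator measurableSet_Ioi, Complex.Gamma_eq_integral (hz j)]
  rfl

lemma cov (hz : ∀ j, 0 < (sf m lam z j).re) :
    ∏ j, Complex.Gamma (sf m lam z j)
      = ∫ w in P m, Kp m lam z (w 0, fun i => w i.succ) := by
  rw [← integral_H m lam z hz]
  conv_lhs => rw [← image_T m]
  rw [integral_image_eq_integral_abs_det_fderiv_smul volume (P_meas m)
    (fun x hx => (hasFDerivAt_T m hx).hasFDerivWithinAt) (injOn_T m) (Hfun m lam z)]
  exact setIntegral_congr_fun (P_meas m) (fun w hw => key_pointwise m lam z hw)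

lemma integrableOn_Kw (hz : ∀ j, 0 < (sf m lam z j).re) :
    IntegrableOn (fun w => Kp m lam z (w 0, fun i => w i.succ)) (P m) := by
  have h0 : IntegrableOn (Hfun m lam z) (T m '' P m) := by
    rw [image_T]; exact integrableOn_H m lam z hz
  have h1 := (integrableOn_image_iff_integrableOn_abs_det_fderiv_smul volume (P_meas m)
    (fun x hx => (hasFDerivAt_T m hx).hasFDerivWithinAt) (injOn_T m) (Hfun m lam z)).mp h0
  exact h1.congr_fun (fun w hw => key_pointwise m lam z hw) (P_meas m)

def Su : Set (Fin (m+1) → ℝ) := {u | ∀ i, 0 < u i}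

lemma Su_meas : MeasurableSet (Su m) := by
  have : Su m = Set.pi Set.univ (fun _ => Set.Ioi (0:ℝ)) := by
    ext u; simp [Su, Set.mem_pi]
  rw [this]
  exact MeasurableSet.univ_pi (fun _ => measurableSet_Ioi)

lemma step4 (hz : ∀ j, 0 < (sf m lam z j).re) :
    ∫ w in P m, Kp m lam z (w 0, fun i => w i.succ)
      = ∫ t in Set.Ioi (0:ℝ), ∫ u in Su m, Kp m lam z (t, u) := by
  set e := MeasurableEquiv.piFinSuccAbove (fun _ : Fin (m+2) => ℝ) 0 with he
  have hmp : MeasurePreserving e volume volume :=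
    volume_preserving_piFinSuccAbove (fun _ : Fin (m+2) => ℝ) 0
  have hKe : ∀ w : Fin (m+2) → ℝ, Kp m lam z (e w) = Kp m lam z (w 0, fun i => w i.succ) := by
    intro w
    have h1 : e w = (w 0, fun i => w (Fin.succAbove 0 i)) := rfl
    rw [h1]
    have h2 : (fun i : Fin (m+1) => w (Fin.succAbove 0 i)) = fun i => w i.succ := by
      funext i; rw [Fin.zero_succAbove]
    rw [h2]
  have hset : P m = e ⁻¹' ((Set.Ioi (0:ℝ)) ×ˢ (Su m)) := by
    ext w
    have h1 : e w = (w 0, fun i => w (Fin.succAbove 0 i)) := rfl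
    simp only [Set.mem_preimage, h1, Set.mem_prod, Set.mem_Ioi, Su, Set.mem_setOf_eq, P]
    constructor
    · intro hw
      exact ⟨hw 0, fun i => hw _⟩
    · rintro ⟨h0, hsucc⟩ k
      induction k using Fin.cases with
      | zero => exact h0
      | succ i =>
          have := hsucc i
          rwa [Fin.zero_succAbove] at this
  have hEmb : MeasurableEmbedding e := e.measurableEmbedding
  have hsmeas : MeasurableSet ((Set.Ioi (0:ℝ)) ×ˢ (Su m)) :=
    measurableSet_Ioi.prod (Su_meas m)
  have hint : Integrable (Kp m lam z) ((volume.restrict (Set.Ioi (0:ℝ))).prod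
      (volume.restrict (Su m))) := by
    rw [Measure.prod_restrict]
    rw [← Measure.volume_eq_prod]
    refine ((hmp.restrict_preimage hsmeas).integrable_comp_emb hEmb).mp ?_
    have h3 : (Kp m lam z) ∘ e = fun w => Kp m lam z (w 0, fun i => w i.succ) :=
      funext hKe
    rw [h3, ← hset]
    exact integrableOn_Kw m lam z hz
  calc ∫ w in P m, Kp m lam z (w 0, fun i => w i.succ)
      = ∫ w in e ⁻¹' ((Set.Ioi (0:ℝ)) ×ˢ (Su m)), Kp m lam z (e w) := by
        rw [← hset]
        exact setIntegral_congr_fun (P_meas m) (fun w _ => (hKe w).symm)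
    _ = ∫ q in ((Set.Ioi (0:ℝ)) ×ˢ (Su m)), Kp m lam z q :=
        hmp.setIntegral_preimage_emb hEmb _ _
    _ = ∫ t in Set.Ioi (0:ℝ), ∫ u in Su m, Kp m lam z (t, u) := by
        rw [Measure.volume_eq_prod, ← Measure.prod_restrict]
        exact integral_prod _ hint

end WithLam

end MellinElambda

end

/-- Mellin transform of `E_λ`: for an integer `a = m+2 ≥ 2`, `λ_1,…,λ_a ∈ ℂ`,
`μ = (1/a)∑_j λ_j`, and
`E_λ(t) = ∫_{(0,∞)^{a−1}} (∏_{j=1}^{a−1} u_j^{λ_{j+1}−λ_j})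
  exp(−t^{1/a}(1/u_1 + u_1/u_2 + ⋯ + u_{a−2}/u_{a−1} + u_{a−1})) du_1/u_1 ⋯ du_{a−1}/u_{a−1}`,
if `Re(z − μ + λ_j) > 0` for all `j`, then
`∫_0^∞ E_λ(t) t^{z−1} dt = ∏_{j=1}^a Γ(z − μ + λ_j)`. -/
theorem mellin_Elambda_eq_prod_Gamma (m : ℕ) (lam : Fin (m+2) → ℂ) (z : ℂ)
    (hz : ∀ j : Fin (m+2), 0 < (z - (∑ j, lam j) / ((m:ℂ)+2) + lam j).re) :
    (∫ t in Set.Ioi (0:ℝ),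
      (∫ u in {u : Fin (m+1) → ℝ | ∀ i, 0 < u i},
        (∏ i : Fin (m+1), ((u i : ℂ)) ^ (lam i.succ - lam i.castSucc))
          * Complex.exp (-(((t ^ (((m:ℝ)+2)⁻¹)) : ℝ) : ℂ)
              * ((((u 0)⁻¹ + ∑ i : Fin (m+1),
                    (if h : (i : ℕ) + 1 < m + 1 then u i / u ⟨(i : ℕ) + 1, h⟩
                     else u i) : ℝ)) : ℂ))
          * (((∏ i : Fin (m+1), (u i)⁻¹ : ℝ)) : ℂ))
      * (t:ℂ) ^ (z - 1)) =
    ∏ j : Fin (m+2), Complex.Gamma (z - (∑ j, lam j) / ((m:ℂ)+2) + lam j) := by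
  have hz' : ∀ j, 0 < (MellinElambda.sf m lam z j).re := hz
  have hmain := (MellinElambda.cov m lam z hz').trans (MellinElambda.step4 m lam z hz')
  rw [show {u : Fin (m+1) → ℝ | ∀ i, 0 < u i} = MellinElambda.Su m from rfl]
  have h1 : Set.EqOn
      (fun t : ℝ => (∫ u in MellinElambda.Su m,
        (∏ i : Fin (m+1), ((u i : ℂ)) ^ (lam i.succ - lam i.castSucc))
          * Complex.exp (-(((t ^ (((m:ℝ)+2)⁻¹)) : ℝ) : ℂ)
              * ((((u 0)⁻¹ + ∑ i : Fin (m+1),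
                    (if h : (i : ℕ) + 1 < m + 1 then u i / u ⟨(i : ℕ) + 1, h⟩
                     else u i) : ℝ)) : ℂ))
          * (((∏ i : Fin (m+1), (u i)⁻¹ : ℝ)) : ℂ))
        * (t:ℂ) ^ (z - 1))
      (fun t : ℝ => ∫ u in MellinElambda.Su m, MellinElambda.Kp m lam z (t, u))
      (Set.Ioi (0:ℝ)) := by
    intro t _
    simp only []
    rw [← MeasureTheory.integral_mul_const]
    rfl
  rw [MeasureTheory.setIntegral_congr_fun measurableSet_Ioi h1]
  exact hmain.symm
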